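/- Let Λ be a set, A a finite linearly ordered set with at least two elements and minimal element ⊥, and for each j ∈ Λ let N_j ⊆ Λ be a finite set with j ∈ N_j. Let P_j : A^Λ → A → ℝ be transition probabilities (P_j(σ)(a) ≥ 0, ∑_{a∈A} P_j(σ)(a) = 1, and P_j(σ) depending only on the restriction of σ to N_j), and define the update operators E_j(f)(σ) := ∑_{a∈A} P_j(σ)(a)·f(σ[j↦a]). Fix x, y : A → ℝ with x(a) ≠ y(a) for a ≠ ⊥ and let χ_{L,a_L} be the associated product-basis functions; let C^{(j,a)}_{S,a_S} (for S ⊆ N_j, a_S : S → A∖{⊥}) be the unique coefficients with E_j(χ_{{j},a}) = ∑_{S⊆N_j, a_S} C^{(j,a)}_{S,a_S}·χ_{S,a_S}, and set β := sup_{j∈Λ, a∈A∖{⊥}} ∑_{S,a_S} |C^{(j,a)}_{S,a_S}|, assumed finite. Assume: (1) |x(a)| ≤ 1 and |y(a)| ≤ 1 for all a ≠ ⊥; (2) x(a)·y(a) ≤ 0 for all a ≠ ⊥; (3) |x(b)| + |y(a)| + |x(b)·y(a)| ≤ 1 whenever a > b > ⊥. Then for every finite nonempty K ⊆ Λ and every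 a_K : K → A∖{⊥}, the averaged update E(χ_{K,a_K}) := (1/|K|)·∑_{j∈K} E_j(χ_{K,a_K}) satisfies ‖E(χ_{K,a_K})‖_Π ≤ β, where ‖g‖_Π denotes the sum of the absolute values of the coefficients of the nonconstant product-basis functions in the unique product-basis expansion of g (which depends on finitely many coordinates, namely those in K ∪ ⋃_{j∈K} N_j). -/

import Mathlib

open Finset

/-- The product-basis function `χ_{S,a_S}` associated to values `x, y : A → ℝ` (with
excluded letter `b0`, in applications the minimal element `⊥`):
`χ_{S,a_S}(σ) = ∏_{i∈S} (x (a_S i) if σ i ≥ a_S i, else y (a_S i))`. -/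
noncomputable def pbChi {Λ A : Type*} [LinearOrder A] (x y : A → ℝ) (b0 : A)
    (p : Σ S : Finset Λ, ({i // i ∈ S} → {a : A // a ≠ b0})) : (Λ → A) → ℝ :=
  fun σ => ∏ i : {i // i ∈ p.1},
    if ((p.2 i : A) ≤ σ (i : Λ)) then x (p.2 i) else y (p.2 i)

/-- The update operator at site `j` with single-site transition probabilities `Pj`:
`E_j(f)(σ) = ∑_{a∈A} Pj σ a · f (σ[j↦a])`. -/
noncomputable def updateOp {Λ A : Type*} [Fintype A] [DecidableEq Λ]
    (Pj : (Λ → A) → A → ℝ) (j : Λ) (f : (Λ → A) → ℝ) (σ : Λ → A) : ℝ :=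
  ∑ a : A, Pj σ a * f (Function.update σ j a)

section Aux
set_option linter.unusedSectionVars false

variable {Λ A : Type*} [DecidableEq Λ] [LinearOrder A] [OrderBot A]

/-- single-site evaluation, with `⊥` acting as "no constraint". -/
noncomputable def pbEv (x y : A → ℝ) (a s : A) : ℝ :=
  if a = ⊥ then 1 else if a ≤ s then x a else y a

/-- the function `Λ → A` underlying a basis element. -/
def pbTo (p : Σ S : Finset Λ, ({i // i ∈ S} → {a : A // a ≠ ⊥})) : Λ → A :=
  fun i => if h : i ∈ p.1 then (p.2 ⟨i, h⟩ : A) else ⊥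

/-- the basis element corresponding to a function `Λ → A`, truncated to `U`. -/
def pbOf (U : Finset Λ) (f : Λ → A) : Σ S : Finset Λ, ({i // i ∈ S} → {a : A // a ≠ ⊥}) :=
  ⟨U.filter (fun i => f i ≠ ⊥), fun i => ⟨f i.1, (Finset.mem_filter.mp i.2).2⟩⟩

@[simp] lemma pbEv_bot (x y : A → ℝ) (s : A) : pbEv x y ⊥ s = 1 := if_pos rfl

lemma subtype_prod_eq {s : Finset Λ} (g : {i // i ∈ s} → ℝ) (F : Λ → ℝ)
    (h : ∀ i : {i // i ∈ s}, g i = F i.1) :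
    ∏ i : {i // i ∈ s}, g i = ∏ i ∈ s, F i := by
  rw [Finset.prod_congr rfl (fun i _ => h i)]
  exact (Finset.prod_subtype s (fun _ => Iff.rfl) F).symm

lemma pbChi_pbOf (x y : A → ℝ) (U : Finset Λ) (f : Λ → A) (σ : Λ → A) :
    pbChi x y ⊥ (pbOf U f) σ = ∏ i ∈ U, pbEv x y (f i) (σ i) := by
  have h1 : pbChi x y ⊥ (pbOf U f) σ
      = ∏ i ∈ U.filter (fun i => f i ≠ ⊥), pbEv x y (f i) (σ i) := by
    refine subtype_prod_eq _ _ (fun i => ?_)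
    have hfi : f i.1 ≠ ⊥ := (Finset.mem_filter.mp i.2).2
    simp [pbOf, pbEv, hfi]
    congr 1
  rw [h1]
  refine Finset.prod_subset (Finset.filter_subset _ _) (fun i hi hni => ?_)
  have : f i = ⊥ := by
    by_contra hne
    exact hni (Finset.mem_filter.mpr ⟨hi, hne⟩)
  simp [pbEv, this]

lemma pbChi_eq_prod (x y : A → ℝ)
    (p : Σ S : Finset Λ, ({i // i ∈ S} → {a : A // a ≠ ⊥}))
    (U : Finset Λ) (hU : p.1 ⊆ U) (σ : Λ → A) :
    pbChi x y ⊥ p σ = ∏ i ∈ U, pbEv x y (pbTo p i) (σ i) := by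
  have h1 : pbChi x y ⊥ p σ = ∏ i ∈ p.1, pbEv x y (pbTo p i) (σ i) := by
    refine subtype_prod_eq _ _ (fun i => ?_)
    have h2 : pbTo p i.1 = (p.2 i : A) := by
      simp only [pbTo, dif_pos i.2, Subtype.coe_eta]
    rw [h2]
    simp [pbEv, (p.2 i).2]
  rw [h1]
  refine Finset.prod_subset hU (fun i hi hni => ?_)
  simp [pbTo, hni, pbEv]

lemma pbChi_single (x y : A → ℝ) (j : Λ) (a : {a : A // a ≠ ⊥}) (τ : Λ → A) :
    pbChi x y ⊥ ⟨{j}, fun _ => a⟩ τ = pbEv x y a (τ j) := by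
  have h1 : pbChi x y ⊥ ⟨{j}, fun _ => a⟩ τ
      = ∏ i ∈ ({j} : Finset Λ), pbEv x y a (τ i) := by
    refine subtype_prod_eq _ _ (fun i => ?_)
    simp [pbEv, a.2]
  rw [h1, Finset.prod_singleton]

/-- expansion coefficients of the single-site product `pbEv a * pbEv b`. -/
noncomputable def pbGamma (x y : A → ℝ) (a b c : A) : ℝ :=
  if a = ⊥ then (if c = b then 1 else 0)
  else if b = ⊥ then (if c = a then 1 else 0)
  else if a = b then
    (if c = ⊥ then -(x a * y a) else 0) + (if c = a then x a + y a else 0)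
  else if a < b then
    (if c = ⊥ then -(x a * y b) else 0) + (if c = a then y b else 0) + (if c = b then x a else 0)
  else
    (if c = ⊥ then -(x b * y a) else 0) + (if c = b then y a else 0) + (if c = a then x b else 0)

variable [Fintype A]

lemma sum_delta_mul (d : A) (v : ℝ) (g : A → ℝ) :
    ∑ c : A, (if c = d then v else 0) * g c = v * g d := by
  rw [Finset.sum_eq_single d]
  · simp
  · intro c _ hc; simp [hc]
  · intro h; exact absurd (Finset.mem_univ d) h

lemma pbGamma_spec (x y : A → ℝ) (a b s : A) :
    ∑ c : A, pbGamma x y a b c * pbEv x y c s = pbEv x y a s * pbEv x y b s := by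
  by_cases ha : a = ⊥
  · subst ha
    have hg : ∀ c, pbGamma x y ⊥ b c = if c = b then (1:ℝ) else 0 := fun c => by
      simp [pbGamma]
    rw [Finset.sum_congr rfl fun c _ => by rw [hg c], sum_delta_mul]
    simp
  by_cases hb : b = ⊥
  · subst hb
    have hg : ∀ c, pbGamma x y a ⊥ c = if c = a then (1:ℝ) else 0 := fun c => by
      simp [pbGamma, ha]
    rw [Finset.sum_congr rfl fun c _ => by rw [hg c], sum_delta_mul]
    simp
  by_cases hab : a = b
  · subst hab
    have hg : ∀ c, pbGamma x y a a c
        = (if c = ⊥ then -(x a * y a) else 0) + (if c = a then x a + y a else 0) := fun c => by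
      simp [pbGamma, ha]
    rw [Finset.sum_congr rfl fun c _ => by rw [hg c, add_mul], Finset.sum_add_distrib,
      sum_delta_mul, sum_delta_mul]
    simp only [pbEv_bot, pbEv, if_neg ha]
    split_ifs <;> ring
  by_cases hlt : a < b
  · have hg : ∀ c, pbGamma x y a b c
        = ((if c = ⊥ then -(x a * y b) else 0) + (if c = a then y b else 0))
          + (if c = b then x a else 0) := fun c => by
      simp [pbGamma, ha, hb, hab, hlt]
    rw [Finset.sum_congr rfl fun c _ => by rw [hg c, add_mul, add_mul], Finset.sum_add_distrib,
      Finset.sum_add_distrib, sum_delta_mul, sum_delta_mul, sum_delta_mul]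
    simp only [pbEv_bot, pbEv, if_neg ha, if_neg hb]
    have himp : b ≤ s → a ≤ s := fun h => le_trans hlt.le h
    by_cases h1 : a ≤ s <;> by_cases h2 : b ≤ s
    · simp [h1, h2] <;> ring
    · simp [h1, h2] <;> ring
    · exact absurd (himp h2) h1
    · simp [h1, h2] <;> ring
  · have hlt' : b < a := lt_of_le_of_ne (not_lt.mp hlt) (fun h => hab h.symm)
    have hg : ∀ c, pbGamma x y a b c
        = ((if c = ⊥ then -(x b * y a) else 0) + (if c = b then y a else 0))
          + (if c = a then x b else 0) := fun c => by
      simp [pbGamma, ha, hb, hab, hlt]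
    rw [Finset.sum_congr rfl fun c _ => by rw [hg c, add_mul, add_mul], Finset.sum_add_distrib,
      Finset.sum_add_distrib, sum_delta_mul, sum_delta_mul, sum_delta_mul]
    simp only [pbEv_bot, pbEv, if_neg ha, if_neg hb]
    have himp : a ≤ s → b ≤ s := fun h => le_trans hlt'.le h
    by_cases h1 : a ≤ s <;> by_cases h2 : b ≤ s
    · simp [h1, h2] <;> ring
    · exact absurd (himp h1) h2
    · simp [h1, h2] <;> ring
    · simp [h1, h2] <;> ring

lemma sum_abs_delta (d : A) (v : ℝ) : ∑ c : A, |if c = d then v else 0| = |v| := by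
  rw [Finset.sum_eq_single d]
  · simp
  · intro c _ hc; simp [hc]
  · intro h; exact absurd (Finset.mem_univ d) h

lemma pbGamma_mass (x y : A → ℝ)
    (hx1 : ∀ a : A, a ≠ ⊥ → |x a| ≤ 1) (hy1 : ∀ a : A, a ≠ ⊥ → |y a| ≤ 1)
    (hsign : ∀ a : A, a ≠ ⊥ → x a * y a ≤ 0)
    (h3 : ∀ a b : A, ⊥ < b → b < a → |x b| + |y a| + |x b * y a| ≤ 1)
    (a b : A) : ∑ c : A, |pbGamma x y a b c| ≤ 1 := by
  by_cases ha : a = ⊥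
  · subst ha
    have hg : ∀ c, pbGamma x y ⊥ b c = if c = b then (1:ℝ) else 0 := fun c => by
      simp [pbGamma]
    rw [Finset.sum_congr rfl fun c _ => by rw [hg c], sum_abs_delta]
    simp
  by_cases hb : b = ⊥
  · subst hb
    have hg : ∀ c, pbGamma x y a ⊥ c = if c = a then (1:ℝ) else 0 := fun c => by
      simp [pbGamma, ha]
    rw [Finset.sum_congr rfl fun c _ => by rw [hg c], sum_abs_delta]
    simp
  by_cases hab : a = b
  · subst hab
    have hg : ∀ c, pbGamma x y a a c
        = (if c = ⊥ then -(x a * y a) else 0) + (if c = a then x a + y a else 0) := fun c => by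
      simp [pbGamma, ha]
    have hle : ∑ c : A, |pbGamma x y a a c|
        ≤ ∑ c : A, (|if c = ⊥ then -(x a * y a) else 0| + |if c = a then x a + y a else 0|) :=
      Finset.sum_le_sum (fun c _ => by rw [hg c]; exact abs_add_le _ _)
    rw [Finset.sum_add_distrib, sum_abs_delta, sum_abs_delta] at hle
    refine hle.trans ?_
    have hu := hx1 a ha; have hv := hy1 a ha; have hs := hsign a ha
    have hx' := abs_le.mp hu; have hy' := abs_le.mp hv
    have habs : |x a * y a| = -(x a * y a) := abs_of_nonpos hs
    have h1 : |x a + y a| ≤ 1 + x a * y a := by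
      refine abs_le.mpr ⟨?_, ?_⟩ <;> nlinarith
    rw [abs_neg, habs]
    linarith
  have key : ∀ u v : A, u < v → u ≠ ⊥ → v ≠ ⊥ →
      ∑ c : A, |((if c = ⊥ then -(x u * y v) else 0) + (if c = u then y v else 0))
        + (if c = v then x u else 0)| ≤ 1 := by
    intro u v huv hu hv
    have hle : ∑ c : A, |((if c = ⊥ then -(x u * y v) else 0) + (if c = u then y v else 0))
        + (if c = v then x u else 0)|
        ≤ ∑ c : A, (|if c = ⊥ then -(x u * y v) else 0| + |if c = u then y v else 0|
          + |if c = v then x u else 0|) := by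
      refine Finset.sum_le_sum (fun c _ => ?_)
      refine (abs_add_le _ _).trans ?_
      have := abs_add_le ((if c = ⊥ then -(x u * y v) else 0)) ((if c = u then y v else 0))
      linarith
    rw [Finset.sum_add_distrib, Finset.sum_add_distrib, sum_abs_delta, sum_abs_delta,
      sum_abs_delta] at hle
    refine hle.trans ?_
    have := h3 v u (Ne.bot_lt hu) huv
    rw [abs_neg]
    linarith
  by_cases hlt : a < b
  · have hg : ∀ c, pbGamma x y a b c
        = ((if c = ⊥ then -(x a * y b) else 0) + (if c = a then y b else 0))
          + (if c = b then x a else 0) := fun c => by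
      simp [pbGamma, ha, hb, hab, hlt]
    rw [Finset.sum_congr rfl fun c _ => by rw [hg c]]
    exact key a b hlt ha hb
  · have hlt' : b < a := lt_of_le_of_ne (not_lt.mp hlt) (fun h => hab h.symm)
    have hg : ∀ c, pbGamma x y a b c
        = ((if c = ⊥ then -(x b * y a) else 0) + (if c = b then y a else 0))
          + (if c = a then x b else 0) := fun c => by
      simp [pbGamma, ha, hb, hab, hlt]
    rw [Finset.sum_congr rfl fun c _ => by rw [hg c]]
    exact key b a hlt' hb ha

end Aux

section PerJ
set_option linter.unusedSectionVars false

variable {Λ A : Type*} [DecidableEq Λ] [Fintype A] [LinearOrder A] [OrderBot A]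

/-- the letter function of the restriction of `aK` to `K.erase j`. -/
def gTf (K : Finset Λ) (aK : {i // i ∈ K} → {a : A // a ≠ ⊥}) (j : Λ) : Λ → A :=
  fun i => if i ∈ K.erase j then pbTo ⟨K, aK⟩ i else ⊥

/-- extend a choice function on `U` by `⊥` outside `U`. -/
def cExt (U : Finset Λ) (c : {i // i ∈ U} → A) : Λ → A :=
  fun i => if h : i ∈ U then c ⟨i, h⟩ else ⊥

lemma perJ (x y : A → ℝ) (K : Finset Λ) (aK : {i // i ∈ K} → {a : A // a ≠ ⊥})
    (Nj : Finset Λ) (Pj : (Λ → A) → A → ℝ) (j : Λ) (hj : j ∈ K)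
    (C1 : (Σ S : Finset Λ, ({i // i ∈ S} → {a : A // a ≠ ⊥})) → ℝ)
    (hCsupp : ∀ p, ¬ p.1 ⊆ Nj → C1 p = 0)
    (hC : ∀ τ, updateOp Pj j (pbChi x y ⊥ ⟨{j}, fun _ => aK ⟨j, hj⟩⟩) τ
      = ∑ᶠ p, C1 p * pbChi x y ⊥ p τ)
    (σ : Λ → A) :
    updateOp Pj j (pbChi x y ⊥ ⟨K, aK⟩) σ
      = ∑ p ∈ Nj.powerset.sigma
            (fun S => (Finset.univ : Finset ({i // i ∈ S} → {a : A // a ≠ ⊥}))),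
          ∑ c : ({i // i ∈ K.erase j ∪ Nj} → A),
            (C1 p * ∏ i : {i // i ∈ K.erase j ∪ Nj},
              pbGamma x y (gTf K aK j i.1) (pbTo p i.1) (c i))
            * pbChi x y ⊥ (pbOf (K.erase j ∪ Nj) (cExt _ c)) σ := by
  classical
  set U : Finset Λ := K.erase j ∪ Nj with hU
  set W : ℝ := ∏ i ∈ U, pbEv x y (gTf K aK j i) (σ i) with hW
  set B := Nj.powerset.sigma
      (fun S => (Finset.univ : Finset ({i // i ∈ S} → {a : A // a ≠ ⊥}))) with hB
  -- Step A : the updated configuration factorizes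
  have hupd : ∀ a : A, pbChi x y ⊥ ⟨K, aK⟩ (Function.update σ j a)
      = pbEv x y (aK ⟨j, hj⟩) a * W := by
    intro a
    rw [pbChi_eq_prod x y ⟨K, aK⟩ K (subset_refl K), ← Finset.mul_prod_erase K _ hj]
    congr 1
    · have h1 : pbTo (⟨K, aK⟩ : Σ S : Finset Λ, ({i // i ∈ S} → {a : A // a ≠ ⊥})) j
          = (aK ⟨j, hj⟩ : A) := by simp [pbTo, hj]
      rw [h1, Function.update_self]
    · rw [hW]
      have h2 : ∀ i ∈ K.erase j,
          pbEv x y (pbTo (⟨K, aK⟩ : Σ S : Finset Λ, ({i // i ∈ S} → {a : A // a ≠ ⊥})) i)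
            (Function.update σ j a i) = pbEv x y (gTf K aK j i) (σ i) := by
        intro i hi
        rw [Function.update_of_ne (Finset.ne_of_mem_erase hi), gTf, if_pos hi]
      rw [Finset.prod_congr rfl h2]
      refine Finset.prod_subset Finset.subset_union_left (fun i _ hni => ?_)
      have h4 : gTf K aK j i = ⊥ := by
        rw [gTf, if_neg hni]
      rw [h4, pbEv_bot]
  -- Steps B, C, D : reduce to single-site expansion
  have hstep : updateOp Pj j (pbChi x y ⊥ ⟨K, aK⟩) σ
      = W * ∑ p ∈ B, C1 p * pbChi x y ⊥ p σ := by
    have hBC : updateOp Pj j (pbChi x y ⊥ ⟨K, aK⟩) σ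
        = W * updateOp Pj j (pbChi x y ⊥ ⟨{j}, fun _ => aK ⟨j, hj⟩⟩) σ := by
      unfold updateOp
      rw [Finset.mul_sum]
      refine Finset.sum_congr rfl (fun a _ => ?_)
      rw [hupd a, pbChi_single, Function.update_self]
      ring
    have hsub : Function.support (fun p => C1 p * pbChi x y ⊥ p σ) ⊆ ↑B := by
      intro p hp
      have hC1 : C1 p ≠ 0 := fun h => hp (by simp [Function.mem_support, h])
      have hpN : p.1 ⊆ Nj := by
        by_contra hcon
        exact hC1 (hCsupp p hcon)
      exact Finset.mem_coe.mpr (by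
        rw [hB]
        exact Finset.mem_sigma.mpr ⟨Finset.mem_powerset.mpr hpN, Finset.mem_univ _⟩)
    rw [hBC, hC σ, finsum_eq_sum_of_support_subset _ hsub]
  rw [hstep, Finset.mul_sum]
  refine Finset.sum_congr rfl (fun p hp => ?_)
  have hpU : p.1 ⊆ U := by
    rw [hB] at hp
    exact (Finset.mem_powerset.mp (Finset.mem_sigma.mp hp).1).trans Finset.subset_union_right
  -- Step F : expand the overlap products
  have hF : W * ∏ i ∈ U, pbEv x y (pbTo p i) (σ i)
      = ∑ c : ({i // i ∈ U} → A),
          (∏ i : {i // i ∈ U}, pbGamma x y (gTf K aK j i.1) (pbTo p i.1) (c i))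
            * pbChi x y ⊥ (pbOf U (cExt U c)) σ := by
    rw [hW, ← Finset.prod_mul_distrib]
    rw [Finset.prod_congr rfl
      (fun i _ => (pbGamma_spec x y (gTf K aK j i) (pbTo p i) (σ i)).symm)]
    rw [Finset.prod_subtype U (fun _ => Iff.rfl)
      (fun i => ∑ c : A, pbGamma x y (gTf K aK j i) (pbTo p i) c * pbEv x y c (σ i))]
    rw [Finset.prod_univ_sum (fun _ => (Finset.univ : Finset A))
      (fun (i : {i // i ∈ U}) (c : A) =>
        pbGamma x y (gTf K aK j i.1) (pbTo p i.1) c * pbEv x y c (σ i.1)),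
      Fintype.piFinset_univ]
    refine Finset.sum_congr rfl (fun c _ => ?_)
    rw [Finset.prod_mul_distrib]
    congr 1
    rw [pbChi_pbOf]
    refine subtype_prod_eq _ _ (fun i => ?_)
    have hcc : cExt U c i.1 = c i := by
      rw [cExt]
      simp only [dif_pos i.2, Subtype.coe_eta]
    rw [hcc]
  rw [pbChi_eq_prod x y p U hpU σ]
  rw [show W * (C1 p * ∏ i ∈ U, pbEv x y (pbTo p i) (σ i))
      = C1 p * (W * ∏ i ∈ U, pbEv x y (pbTo p i) (σ i)) from by ring, hF, Finset.mul_sum]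
  exact Finset.sum_congr rfl (fun c _ => by ring)

end PerJ

section Mass
set_option linter.unusedSectionVars false

variable {Λ A : Type*} [DecidableEq Λ] [Fintype A] [LinearOrder A] [OrderBot A]

lemma mass_aux (x y : A → ℝ)
    (hx1 : ∀ a : A, a ≠ ⊥ → |x a| ≤ 1) (hy1 : ∀ a : A, a ≠ ⊥ → |y a| ≤ 1)
    (hsign : ∀ a : A, a ≠ ⊥ → x a * y a ≤ 0)
    (h3 : ∀ a b : A, ⊥ < b → b < a → |x b| + |y a| + |x b * y a| ≤ 1)
    (U : Finset Λ) (g f : Λ → A) (z : ℝ) :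
    ∑ c : ({i // i ∈ U} → A),
      |z * ∏ i : {i // i ∈ U}, pbGamma x y (g i.1) (f i.1) (c i)| ≤ |z| := by
  classical
  have h1 : ∀ c : ({i // i ∈ U} → A),
      |z * ∏ i : {i // i ∈ U}, pbGamma x y (g i.1) (f i.1) (c i)|
        = |z| * ∏ i : {i // i ∈ U}, |pbGamma x y (g i.1) (f i.1) (c i)| := fun c => by
    rw [abs_mul, Finset.abs_prod]
  rw [Finset.sum_congr rfl (fun c _ => h1 c), ← Finset.mul_sum]
  refine mul_le_of_le_one_right (abs_nonneg z) ?_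
  rw [← Fintype.piFinset_univ, ← Finset.prod_univ_sum (fun _ => (Finset.univ : Finset A))
    (fun (i : {i // i ∈ U}) (a : A) => |pbGamma x y (g i.1) (f i.1) a|)]
  exact Finset.prod_le_one (fun i _ => Finset.sum_nonneg fun a _ => abs_nonneg _)
    (fun i _ => pbGamma_mass x y hx1 hy1 hsign h3 _ _)

end Mass

abbrev idxType {Λ : Type*} [DecidableEq Λ] (A : Type*) [LinearOrder A] [OrderBot A]
    (N : Λ → Finset Λ) (K : Finset Λ) :=
  (jj : {j // j ∈ K}) × ((Σ S : Finset Λ, ({i // i ∈ S} → {a : A // a ≠ (⊥ : A)}))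
    × ({i // i ∈ K.erase jj.1 ∪ N jj.1} → A))

section Main
set_option linter.unusedSectionVars false
set_option maxHeartbeats 1000000

variable {Λ A : Type*} [DecidableEq Λ] [Fintype A] [LinearOrder A] [OrderBot A]

def idxF (N : Λ → Finset Λ) (K : Finset Λ) : Finset (idxType A N K) :=
  Finset.univ.sigma (fun jj =>
    ((N jj.1).powerset.sigma
      (fun S => (Finset.univ : Finset ({i // i ∈ S} → {a : A // a ≠ ⊥})))) ×ˢ
    (Finset.univ : Finset ({i // i ∈ K.erase jj.1 ∪ N jj.1} → A)))

def idxR (N : Λ → Finset Λ) (K : Finset Λ) (t : idxType A N K) :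
    Σ S : Finset Λ, ({i // i ∈ S} → {a : A // a ≠ ⊥}) :=
  pbOf (K.erase t.1.1 ∪ N t.1.1) (cExt _ t.2.2)

noncomputable def idxD (x y : A → ℝ) (N : Λ → Finset Λ) (K : Finset Λ)
    (aK : {i // i ∈ K} → {a : A // a ≠ ⊥})
    (C : (j : Λ) → {a : A // a ≠ ⊥} →
      (Σ S : Finset Λ, ({i // i ∈ S} → {a : A // a ≠ ⊥})) → ℝ)
    (t : idxType A N K) : ℝ :=
  C t.1.1 (aK t.1) t.2.1 * ∏ i : {i // i ∈ K.erase t.1.1 ∪ N t.1.1},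
    pbGamma x y (gTf K aK t.1.1 i.1) (pbTo t.2.1 i.1) (t.2.2 i)

lemma idx_decomp (x y : A → ℝ) (N : Λ → Finset Λ) (K : Finset Λ)
    (aK : {i // i ∈ K} → {a : A // a ≠ ⊥})
    (C : (j : Λ) → {a : A // a ≠ ⊥} →
      (Σ S : Finset Λ, ({i // i ∈ S} → {a : A // a ≠ ⊥})) → ℝ)
    (P : Λ → (Λ → A) → A → ℝ) (jj : {j // j ∈ K})
    (hCsupp' : ∀ p, ¬ p.1 ⊆ N jj.1 → C jj.1 (aK jj) p = 0)
    (hC' : ∀ τ, updateOp (P jj.1) jj.1 (pbChi x y ⊥ ⟨{jj.1}, fun _ => aK jj⟩) τ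
      = ∑ᶠ p, C jj.1 (aK jj) p * pbChi x y ⊥ p τ)
    (σ : Λ → A) :
    updateOp (P jj.1) jj.1 (pbChi x y ⊥ ⟨K, aK⟩) σ
      = ∑ pc ∈ (((N jj.1).powerset.sigma
            (fun S => (Finset.univ : Finset ({i // i ∈ S} → {a : A // a ≠ ⊥})))) ×ˢ
            (Finset.univ : Finset ({i // i ∈ K.erase jj.1 ∪ N jj.1} → A))),
          idxD x y N K aK C ⟨jj, pc⟩ * pbChi x y ⊥ (idxR N K ⟨jj, pc⟩) σ := by
  rw [Finset.sum_product]
  rw [perJ x y K aK (N jj.1) (P jj.1) jj.1 jj.2 (C jj.1 (aK jj)) hCsupp' (fun τ => hC' τ) σ]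
  refine Finset.sum_congr rfl fun p hp => Finset.sum_congr rfl fun c hc => ?_
  simp only [idxD, idxR]

end Main

set_option maxHeartbeats 1000000 in
/-- **iteration-bound lemma.** Under Conditions (1)–(3) on the basis values
`x, y` and with `β` bounding the total update-coefficient mass at every site and letter,
the averaged update of any product-basis function `χ_{K,a_K}` (`K` finite nonempty) admits
a finitely supported product-basis expansion whose nonconstant coefficients have total
absolute mass at most `β`, i.e. `‖E(χ_{K,a_K})‖_Π ≤ β`. -/
theorem iteration_bound
    {Λ A : Type*} [DecidableEq Λ] [Fintype A] [LinearOrder A] [OrderBot A]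
    (hA : 2 ≤ Fintype.card A)
    (N : Λ → Finset Λ) (hN : ∀ j, j ∈ N j)
    (P : Λ → (Λ → A) → A → ℝ)
    (hP0 : ∀ j σ a, 0 ≤ P j σ a)
    (hP1 : ∀ j σ, ∑ a : A, P j σ a = 1)
    (hPdep : ∀ j (σ τ : Λ → A), (∀ i ∈ N j, σ i = τ i) → P j σ = P j τ)
    (x y : A → ℝ) (hxy : ∀ a : A, a ≠ ⊥ → x a ≠ y a)
    (hx1 : ∀ a : A, a ≠ ⊥ → |x a| ≤ 1) (hy1 : ∀ a : A, a ≠ ⊥ → |y a| ≤ 1)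
    (hsign : ∀ a : A, a ≠ ⊥ → x a * y a ≤ 0)
    (h3 : ∀ a b : A, ⊥ < b → b < a → |x b| + |y a| + |x b * y a| ≤ 1)
    (C : (j : Λ) → {a : A // a ≠ ⊥} →
      (Σ S : Finset Λ, ({i // i ∈ S} → {a : A // a ≠ ⊥})) → ℝ)
    (hCsupp : ∀ j a p, ¬ p.1 ⊆ N j → C j a p = 0)
    (hC : ∀ (j : Λ) (a : {a : A // a ≠ ⊥}) (σ : Λ → A),
      updateOp (P j) j (pbChi x y ⊥ ⟨{j}, fun _ => a⟩) σ = ∑ᶠ p, C j a p * pbChi x y ⊥ p σ)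
    (β : ℝ) (hβ : ∀ (j : Λ) (a : {a : A // a ≠ ⊥}), ∑ᶠ p, |C j a p| ≤ β)
    (K : Finset Λ) (hK : K.Nonempty) (aK : {i // i ∈ K} → {a : A // a ≠ ⊥}) :
    ∃ D : (Σ S : Finset Λ, ({i // i ∈ S} → {a : A // a ≠ ⊥})) → ℝ,
      (Function.support D).Finite ∧
      (∀ σ : Λ → A,
        (1 / (K.card : ℝ)) * ∑ j ∈ K, updateOp (P j) j (pbChi x y ⊥ ⟨K, aK⟩) σ
          = ∑ᶠ p, D p * pbChi x y ⊥ p σ) ∧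
      ∑ᶠ p, (if p.1 = ∅ then (0 : ℝ) else |D p|) ≤ β := by
  classical
  have hcardK : (0 : ℝ) < (K.card : ℝ) := by exact_mod_cast Finset.card_pos.mpr hK
  set D : (Σ S : Finset Λ, ({i // i ∈ S} → {a : A // a ≠ ⊥})) → ℝ := fun q =>
    (1 / (K.card : ℝ)) *
      ∑ t ∈ (idxF (A := A) N K).filter (fun t => idxR (A := A) N K t = q), idxD x y N K aK C t with hD
  -- support of D
  have hDsupp : Function.support D ⊆ ↑((idxF (A := A) N K).image (idxR (A := A) N K)) := by
    intro q hq
    by_contra hq'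
    apply Function.mem_support.mp hq
    have hemp : (idxF (A := A) N K).filter (fun t => idxR (A := A) N K t = q) = ∅ := by
      refine Finset.filter_eq_empty_iff.mpr (fun t ht heq => ?_)
      exact hq' (Finset.mem_coe.mpr (Finset.mem_image.mpr ⟨t, ht, heq⟩))
    simp only [hD, hemp, Finset.sum_empty, mul_zero]
  -- per-site decomposition
  have hdec : ∀ (jj : {j // j ∈ K}) (σ : Λ → A),
      updateOp (P jj.1) jj.1 (pbChi x y ⊥ ⟨K, aK⟩) σ
        = ∑ pc ∈ (((N jj.1).powerset.sigma
              (fun S => (Finset.univ : Finset ({i // i ∈ S} → {a : A // a ≠ ⊥})))) ×ˢ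
              (Finset.univ : Finset ({i // i ∈ K.erase jj.1 ∪ N jj.1} → A))),
            idxD x y N K aK C ⟨jj, pc⟩ * pbChi x y ⊥ (idxR (A := A) N K ⟨jj, pc⟩) σ := by
    intro jj σ
    exact idx_decomp x y N K aK C P jj (fun p => hCsupp jj.1 (aK jj) p)
      (fun τ => hC jj.1 (aK jj) τ) σ
  -- per-site mass bound
  have hmassj : ∀ jj : {j // j ∈ K},
      ∑ pc ∈ (((N jj.1).powerset.sigma
          (fun S => (Finset.univ : Finset ({i // i ∈ S} → {a : A // a ≠ ⊥})))) ×ˢ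
          (Finset.univ : Finset ({i // i ∈ K.erase jj.1 ∪ N jj.1} → A))),
        |idxD x y N K aK C ⟨jj, pc⟩| ≤ β := by
    intro jj
    rw [Finset.sum_product]
    have h1 : ∑ p ∈ (N jj.1).powerset.sigma
          (fun S => (Finset.univ : Finset ({i // i ∈ S} → {a : A // a ≠ ⊥}))),
        ∑ c ∈ (Finset.univ : Finset ({i // i ∈ K.erase jj.1 ∪ N jj.1} → A)),
          |idxD x y N K aK C ⟨jj, (p, c)⟩|
        ≤ ∑ p ∈ (N jj.1).powerset.sigma
          (fun S => (Finset.univ : Finset ({i // i ∈ S} → {a : A // a ≠ ⊥}))),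
            |C jj.1 (aK jj) p| := by
      refine Finset.sum_le_sum (fun p hp => ?_)
      have h2 := mass_aux x y hx1 hy1 hsign h3 (K.erase jj.1 ∪ N jj.1)
        (gTf K aK jj.1) (pbTo p) (C jj.1 (aK jj) p)
      simpa [idxD] using h2
    refine h1.trans ?_
    have hsubC : Function.support (fun p => |C jj.1 (aK jj) p|)
        ⊆ ↑((N jj.1).powerset.sigma
          (fun S => (Finset.univ : Finset ({i // i ∈ S} → {a : A // a ≠ ⊥})))) := by
      intro p hp
      have hne : C jj.1 (aK jj) p ≠ 0 := by
        intro h0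
        exact Function.mem_support.mp hp (by rw [h0, abs_zero])
      have hpN : p.1 ⊆ N jj.1 := by
        by_contra hcon
        exact hne (hCsupp jj.1 (aK jj) p hcon)
      exact Finset.mem_coe.mpr (Finset.mem_sigma.mpr
        ⟨Finset.mem_powerset.mpr hpN, Finset.mem_univ _⟩)
    rw [← finsum_eq_sum_of_support_subset _ hsubC]
    exact hβ jj.1 (aK jj)
  refine ⟨D, Set.Finite.subset ((idxF (A := A) N K).image (idxR (A := A) N K)).finite_toSet hDsupp, ?_, ?_⟩
  · -- the expansion identity
    intro σ
    have hsub2 : Function.support (fun q => D q * pbChi x y ⊥ q σ)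
        ⊆ ↑((idxF (A := A) N K).image (idxR (A := A) N K)) := by
      intro q hq
      refine hDsupp (Function.mem_support.mpr (fun h0 => ?_))
      exact Function.mem_support.mp hq (by rw [h0, zero_mul])
    rw [finsum_eq_sum_of_support_subset _ hsub2]
    have h1 : ∑ q ∈ (idxF (A := A) N K).image (idxR (A := A) N K), D q * pbChi x y ⊥ q σ
        = ∑ q ∈ (idxF (A := A) N K).image (idxR (A := A) N K),
            ∑ t ∈ (idxF (A := A) N K).filter (fun t => idxR (A := A) N K t = q),
              (1 / (K.card : ℝ)) * (idxD x y N K aK C t * pbChi x y ⊥ (idxR (A := A) N K t) σ) := by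
      refine Finset.sum_congr rfl (fun q hq => ?_)
      simp only [hD]
      rw [mul_assoc, Finset.sum_mul, Finset.mul_sum]
      exact Finset.sum_congr rfl (fun t ht => by
        rw [(Finset.mem_filter.mp ht).2])
    rw [h1, Finset.sum_fiberwise_of_maps_to (fun t ht => Finset.mem_image_of_mem _ ht)]
    rw [← Finset.mul_sum]
    have h2 : ∑ t ∈ idxF (A := A) N K,
        idxD x y N K aK C t * pbChi x y ⊥ (idxR (A := A) N K t) σ
        = ∑ j ∈ K, updateOp (P j) j (pbChi x y ⊥ ⟨K, aK⟩) σ := by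
      rw [idxF, Finset.sum_sigma]
      rw [← Finset.sum_attach K (fun j => updateOp (P j) j (pbChi x y ⊥ ⟨K, aK⟩) σ),
        ← Finset.univ_eq_attach]
      exact Finset.sum_congr rfl (fun jj _ => (hdec jj σ).symm)
    rw [h2]
  · -- the mass bound
    have hsub3 : Function.support (fun q => if q.1 = ∅ then (0:ℝ) else |D q|)
        ⊆ ↑((idxF (A := A) N K).image (idxR (A := A) N K)) := by
      intro q hq
      refine hDsupp (Function.mem_support.mpr (fun h0 => ?_))
      refine Function.mem_support.mp hq ?_
      by_cases hqe : q.1 = ∅ <;> simp [hqe, h0]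
    rw [finsum_eq_sum_of_support_subset _ hsub3]
    have h1 : ∑ q ∈ (idxF (A := A) N K).image (idxR (A := A) N K), (if q.1 = ∅ then (0:ℝ) else |D q|)
        ≤ ∑ q ∈ (idxF (A := A) N K).image (idxR (A := A) N K),
            (1 / (K.card : ℝ)) *
              ∑ t ∈ (idxF (A := A) N K).filter (fun t => idxR (A := A) N K t = q), |idxD x y N K aK C t| := by
      refine Finset.sum_le_sum (fun q hq => ?_)
      have hnn : (0:ℝ) ≤ (1 / (K.card : ℝ)) *
          ∑ t ∈ (idxF (A := A) N K).filter (fun t => idxR (A := A) N K t = q), |idxD x y N K aK C t| :=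
        mul_nonneg (by positivity) (Finset.sum_nonneg (fun t _ => abs_nonneg _))
      by_cases hqe : q.1 = ∅
      · rw [if_pos hqe]; exact hnn
      · rw [if_neg hqe]
        simp only [hD]
        rw [abs_mul, abs_of_nonneg (by positivity : (0:ℝ) ≤ 1 / (K.card : ℝ))]
        exact mul_le_mul_of_nonneg_left (Finset.abs_sum_le_sum_abs _ _) (by positivity)
    refine h1.trans ?_
    rw [← Finset.mul_sum,
      Finset.sum_fiberwise_of_maps_to (fun t ht => Finset.mem_image_of_mem _ ht)]
    have h2 : ∑ t ∈ idxF (A := A) N K, |idxD x y N K aK C t|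
        ≤ (K.card : ℝ) * β := by
      rw [idxF, Finset.sum_sigma]
      have h4 : ∑ jj : {j // j ∈ K},
          (∑ pc ∈ (((N jj.1).powerset.sigma
            (fun S => (Finset.univ : Finset ({i // i ∈ S} → {a : A // a ≠ ⊥})))) ×ˢ
            (Finset.univ : Finset ({i // i ∈ K.erase jj.1 ∪ N jj.1} → A))),
            |idxD x y N K aK C ⟨jj, pc⟩|)
          ≤ ∑ _jj : {j // j ∈ K}, β := Finset.sum_le_sum (fun jj _ => hmassj jj)
      refine h4.trans ?_
      rw [Finset.sum_const, Finset.card_univ, Fintype.card_coe, nsmul_eq_mul]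
    have h5 : (1 / (K.card : ℝ)) * ∑ t ∈ idxF (A := A) N K, |idxD x y N K aK C t|
        ≤ (1 / (K.card : ℝ)) * ((K.card : ℝ) * β) :=
      mul_le_mul_of_nonneg_left h2 (by positivity)
    refine h5.trans ?_
    rw [one_div, ← mul_assoc, inv_mul_cancel₀ (ne_of_gt hcardK), one_mul]
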